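/- Let $\tau : X \to K^\times$ be a group homomorphism such that $\tau(\alpha) - 1 \in \mathfrak{p} \setminus \{0\}$ for every $\alpha \in R$, and set $n_\alpha = v(1 - \tau(\alpha)) \ge 1$. Then $n_{-\alpha} = n_\alpha$ for all $\alpha \in R$, and $$\sum_{J \subseteq I_0} (-1)^{\# J} \sum_{w \in {}^J\mathcal{W}} \Big( \prod_{\alpha \in R^+ \setminus R_J^+} |\tau(w^{-1}(\alpha))| \Big)^{1/2} \Big( \prod_{\alpha \in R \setminus R_J} |1 - \tau(w^{-1}(\alpha))| \Big)^{-1/2} = \sum_{J \subseteq I_0} (-1)^{\# J} \sum_{w \in {}^J\mathcal{W}} q^{\sum_{\alpha \in R} n_\alpha/2 - \sum_{\alpha \in R_J} n_{w^{-1}(\alpha)}/2}.$$ Moreover this quantity equals $\#(\mathcal{W})\, q^{\sum_{\alpha \in R} n_\alpha/2}$ plus a finite integer linear combination of powers $q^{e/2}$ with $e < \sum_{\alpha \in R} n_\alpha$ (the terms with $J \ne \emptyset$ all have strictly smaller exponent). -/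

import Mathlib

/-!
Since `τ(α) ≡ 1 mod 𝔭` on roots, the ultrametric inequality gives `|τ(α)| = 1`, so the first
product in each Casselman term is `1`, and `1 - τ(-α) = -(1 - τ(α)) τ(α)⁻¹` gives `n_{-α} = n_α`.
The Weyl group permutes `R`, so `∑_{α ∈ R ∖ R_J} n_{w⁻¹α} = ∑_{α ∈ R} n_α - ∑_{α ∈ R_J} n_{w⁻¹α}`,
which is the exponent on the right. Every `n_α` is positive and `R_J` contains the simple roots
of `J`, so only `J = ∅` (where `ᴶ𝒲 = 𝒲` and `R_J = ∅`) contributes the top power of `q`.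
-/

open scoped Classical

noncomputable section

/-- The full set of roots `R = R⁺ ∪ (-R⁺)`. -/
def rootsOf {X : Type*} [AddCommGroup X] (Rp : Finset X) : Finset X :=
  Rp ∪ Rp.image (fun a => -a)

/-- The set of negative roots `R⁻ = -R⁺`. -/
def negRootsOf {X : Type*} [AddCommGroup X] (Rp : Finset X) : Finset X :=
  Rp.image (fun a => -a)

/-- The length of `w` with respect to the generating set of simple reflections:
the least `n` such that `w` is a product of `n` simple reflections. -/
def wordLen {W : Type*} [Group W] {I0 : Type*} (s : I0 → W) (w : W) : ℕ :=
  sInf {n : ℕ | ∃ l : List I0, l.length = n ∧ (l.map s).prod = w}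

/-- The standard parabolic subgroup `𝒲_J` generated by the simple reflections in `J`. -/
def WJ {W : Type*} [Group W] {I0 : Type*} (s : I0 → W) (J : Finset I0) : Subgroup W :=
  Subgroup.closure (s '' (J : Set I0))

/-- `R_J`, the set of roots of the form `u • α_i` with `u ∈ 𝒲_J`, `i ∈ J`, as a set. -/
def RJset {X : Type*} [AddCommGroup X] {W : Type*} [Group W] [DistribMulAction W X]
    {I0 : Type*} (sα : I0 → X) (s : I0 → W) (J : Finset I0) : Set X :=
  {x | ∃ u ∈ WJ s J, ∃ i ∈ J, x = u • sα i}

/-- `R_J⁺ = R_J ∩ R⁺`. -/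
def RJp {X : Type*} [AddCommGroup X] {W : Type*} [Group W] [DistribMulAction W X]
    {I0 : Type*} (Rp : Finset X) (sα : I0 → X) (s : I0 → W) (J : Finset I0) : Finset X :=
  Rp.filter (fun a => a ∈ RJset sα s J)

/-- `R_J` as a finite set of roots. -/
def RJfull {X : Type*} [AddCommGroup X] {W : Type*} [Group W] [DistribMulAction W X]
    {I0 : Type*} (Rp : Finset X) (sα : I0 → X) (s : I0 → W) (J : Finset I0) : Finset X :=
  (rootsOf Rp).filter (fun a => a ∈ RJset sα s J)

/-- `ᴶ𝒲`, the set of elements of the Weyl group of minimal length in their coset `𝒲_J w`. -/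
def JW {W : Type*} [Group W] [Fintype W] {I0 : Type*} (s : I0 → W) (J : Finset I0) :
    Finset W :=
  Finset.univ.filter (fun w => ∀ u ∈ WJ s J, wordLen s w ≤ wordLen s (u * w))

/-- The axioms of a (reduced) root system with Weyl group `W`, positive roots `Rp`,
simple roots `sα i` and simple reflections `s i`. -/
structure IsRootSystemData {X : Type*} [AddCommGroup X] {W : Type*} [Group W]
    [DistribMulAction W X] {I0 : Type*} (Rp : Finset X) (sα : I0 → X) (s : I0 → W) :
    Prop where
  neg_notMem : ∀ a ∈ Rp, -a ∉ Rp
  reduced : ∀ a ∈ rootsOf Rp, ∀ n : ℤ, n • a ∈ rootsOf Rp → n = 1 ∨ n = -1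
  stable : ∀ (w : W), ∀ a ∈ rootsOf Rp, w • a ∈ rootsOf Rp
  simple_mem : ∀ i, sα i ∈ Rp
  refl_simple : ∀ i, s i • sα i = -sα i
  refl_perm : ∀ i, ∀ a ∈ Rp, a ≠ sα i → s i • a ∈ Rp
  gen : Subgroup.closure (Set.range s) = ⊤
  faithful : ∀ w : W, (∀ x : X, w • x = x) → w = 1


section Valuation

variable {K : Type*} [Field K] (v : K → ℤ)

lemma val_one (hv_mul : ∀ x y : K, x ≠ 0 → y ≠ 0 → v (x * y) = v x + v y) : v 1 = 0 := by
  have h := hv_mul 1 1 one_ne_zero one_ne_zero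
  rw [one_mul] at h
  omega

lemma val_neg (hv_mul : ∀ x y : K, x ≠ 0 → y ≠ 0 → v (x * y) = v x + v y) {x : K} (hx : x ≠ 0) :
    v (-x) = v x := by
  have h := hv_mul (-1) (-1) (by norm_num) (by norm_num)
  rw [neg_mul_neg, one_mul, val_one v hv_mul] at h
  rw [← neg_one_mul, hv_mul _ _ (by norm_num) hx]
  omega

lemma val_eq_zero_of_pos_val_sub_one
    (hv_mul : ∀ x y : K, x ≠ 0 → y ≠ 0 → v (x * y) = v x + v y)
    (hv_min : ∀ x y : K, x ≠ 0 → y ≠ 0 → x + y ≠ 0 → min (v x) (v y) ≤ v (x + y))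
    {x : K} (hx : x ≠ 0) (hx1 : x - 1 ≠ 0) (hpos : 0 < v (x - 1)) : v x = 0 := by
  have h1x : 1 - x ≠ 0 := by rwa [← neg_sub, neg_ne_zero]
  have hv1x : v (1 - x) = v (x - 1) := by rw [← neg_sub, val_neg v hv_mul hx1]
  have hle := hv_min 1 (x - 1) one_ne_zero hx1 (by rwa [add_sub_cancel])
  have hge := hv_min x (1 - x) hx h1x (by rw [add_sub_cancel]; exact one_ne_zero)
  rw [add_sub_cancel, val_one v hv_mul] at hle hge
  omega

lemma val_one_sub_inv (hv_mul : ∀ x y : K, x ≠ 0 → y ≠ 0 → v (x * y) = v x + v y)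
    {x : K} (hx : x ≠ 0) (hx1 : 1 - x ≠ 0) (hvx : v x = 0) : v (1 - x⁻¹) = v (1 - x) := by
  have hvinv : v x⁻¹ = 0 := by
    have h := hv_mul x x⁻¹ hx (inv_ne_zero hx)
    rw [mul_inv_cancel₀ hx, val_one v hv_mul, hvx] at h
    omega
  have hfactor : 1 - x⁻¹ = -((1 - x) * x⁻¹) := by field_simp; ring
  rw [hfactor, val_neg v hv_mul (mul_ne_zero hx1 (inv_ne_zero hx)),
    hv_mul _ _ hx1 (inv_ne_zero hx), hvinv, add_zero]

end Valuation

lemma map_neg_eq_inv_of_map_add {X G : Type*} [AddGroup X] [Group G] {τ : X → G}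
    (hτ : ∀ a b : X, τ (a + b) = τ a * τ b) (a : X) : τ (-a) = (τ a)⁻¹ :=
  map_neg (AddMonoidHom.mk' (fun a => Additive.ofMul (τ a)) hτ) a

lemma Real.inv_sqrt_prod_zpow_neg {ι : Type*} (s : Finset ι) (f : ι → ℤ) {q : ℝ} (hq : 0 < q) :
    (√(∏ i ∈ s, q ^ (-f i)))⁻¹ = q ^ ((∑ i ∈ s, (f i : ℝ)) / 2) := by
  simp_rw [← Real.rpow_intCast, ← Real.rpow_sum_of_pos hq, Real.sqrt_eq_rpow,
    ← Real.rpow_mul hq.le, ← Real.rpow_neg hq.le]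
  push_cast
  rw [Finset.sum_neg_distrib]
  ring_nf

lemma exists_fin_sum_zpow_half_eq {ι : Type*} (s : Finset ι) (c e : ι → ℤ) {B : ℤ}
    (he : ∀ i ∈ s, e i < B) (q : ℝ) :
    ∃ (m : ℕ) (c' : Fin m → ℤ) (e' : Fin m → ℤ), (∀ k, e' k < B) ∧
      ∑ i ∈ s, (c i : ℝ) * q ^ ((e i : ℝ) / 2) = ∑ k, (c' k : ℝ) * q ^ ((e' k : ℝ) / 2) := by
  refine ⟨s.card, fun k => c (s.equivFin.symm k), fun k => e (s.equivFin.symm k),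
    fun k => he _ (s.equivFin.symm k).2, ?_⟩
  rw [← Finset.sum_coe_sort s, ← s.equivFin.symm.sum_comp]

section RootSystem

variable {X : Type*} [AddCommGroup X] {W : Type*} [Group W] [DistribMulAction W X]
  {I0 : Type*} {Rp : Finset X} {sα : I0 → X} {s : I0 → W}

lemma IsRootSystemData.sum_rootsOf_smul {M : Type*} [AddCommMonoid M]
    (hRS : IsRootSystemData Rp sα s) (w : W) (f : X → M) :
    ∑ a ∈ rootsOf Rp, f (w • a) = ∑ a ∈ rootsOf Rp, f a :=
  Finset.sum_nbij' (w • ·) (w⁻¹ • ·) (fun a ha => hRS.stable w a ha)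
    (fun a ha => hRS.stable w⁻¹ a ha) (fun a _ => inv_smul_smul w a)
    (fun a _ => smul_inv_smul w a) (fun _ _ => rfl)

lemma RJfull_subset_rootsOf (J : Finset I0) : RJfull Rp sα s J ⊆ rootsOf Rp :=
  Finset.filter_subset _ _

lemma RJfull_empty : RJfull Rp sα s ∅ = ∅ := by
  ext a
  simp [RJfull, RJset]

lemma IsRootSystemData.simpleRoot_mem_RJfull (hRS : IsRootSystemData Rp sα s) {J : Finset I0}
    {i : I0} (hi : i ∈ J) : sα i ∈ RJfull Rp sα s J :=
  Finset.mem_filter.mpr ⟨Finset.mem_union_left _ (hRS.simple_mem i),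
    1, Subgroup.one_mem _, i, hi, (one_smul W _).symm⟩

lemma IsRootSystemData.sum_RJfull_pos (hRS : IsRootSystemData Rp sα s) {n : X → ℤ}
    (hn : ∀ a ∈ rootsOf Rp, 0 < n a) {J : Finset I0} (hJ : J.Nonempty) (w : W) :
    0 < ∑ a ∈ RJfull Rp sα s J, n (w⁻¹ • a) := by
  obtain ⟨i, hi⟩ := hJ
  have hpos : ∀ a ∈ RJfull Rp sα s J, 0 < n (w⁻¹ • a) := fun a ha =>
    hn _ (hRS.stable w⁻¹ a (RJfull_subset_rootsOf J ha))
  exact Finset.sum_pos' (fun a ha => (hpos a ha).le)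
    ⟨_, hRS.simpleRoot_mem_RJfull hi, hpos _ (hRS.simpleRoot_mem_RJfull hi)⟩

lemma JW_empty [Fintype W] : JW s (∅ : Finset I0) = Finset.univ := by
  refine Finset.filter_true_of_mem fun w _ u hu => ?_
  rw [WJ, Finset.coe_empty, Set.image_empty, Subgroup.closure_empty, Subgroup.mem_bot] at hu
  rw [hu, one_mul]

lemma IsRootSystemData.casselman_term_eq (hRS : IsRootSystemData Rp sα s) {q : ℝ} (hq : 0 < q)
    {u : X → ℤ} (hu : ∀ a ∈ rootsOf Rp, u a = 0) (n : X → ℤ) (J : Finset I0) (w : W) :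
    √(∏ a ∈ Rp \ RJp Rp sα s J, q ^ (-u (w⁻¹ • a)))
        * (√(∏ a ∈ rootsOf Rp \ RJfull Rp sα s J, q ^ (-n (w⁻¹ • a))))⁻¹
      = q ^ ((∑ a ∈ rootsOf Rp, (n a : ℝ)) / 2
          - (∑ a ∈ RJfull Rp sα s J, (n (w⁻¹ • a) : ℝ)) / 2) := by
  have hunit : ∏ a ∈ Rp \ RJp Rp sα s J, q ^ (-u (w⁻¹ • a)) = 1 :=
    Finset.prod_eq_one fun a ha => by
      rw [hu _ (hRS.stable w⁻¹ a (Finset.mem_union_left _ (Finset.mem_sdiff.mp ha).1)),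
        neg_zero, zpow_zero]
  rw [hunit, Real.sqrt_one, one_mul, Real.inv_sqrt_prod_zpow_neg _ _ hq,
    Finset.sum_sdiff_eq_sub (RJfull_subset_rootsOf J),
    hRS.sum_rootsOf_smul w⁻¹ (fun a => (n a : ℝ)), sub_div]

lemma IsRootSystemData.exists_sum_eq_card_mul_add_lower_order [Fintype W] [Fintype I0]
    (hRS : IsRootSystemData Rp sα s) {n : X → ℤ} (hn : ∀ a ∈ rootsOf Rp, 0 < n a) (q : ℝ) :
    ∃ (m : ℕ) (c : Fin m → ℤ) (e : Fin m → ℤ), (∀ k, e k < ∑ a ∈ rootsOf Rp, n a) ∧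
      ∑ J : Finset I0, (-1 : ℝ) ^ J.card * ∑ w ∈ JW s J,
          q ^ ((∑ a ∈ rootsOf Rp, (n a : ℝ)) / 2
            - (∑ a ∈ RJfull Rp sα s J, (n (w⁻¹ • a) : ℝ)) / 2)
        = (Fintype.card W : ℝ) * q ^ ((∑ a ∈ rootsOf Rp, (n a : ℝ)) / 2)
          + ∑ k : Fin m, (c k : ℝ) * q ^ ((e k : ℝ) / 2) := by
  set N := ∑ a ∈ rootsOf Rp, n a
  obtain ⟨m, c, e, he, hsum⟩ := exists_fin_sum_zpow_half_eq
    ((Finset.univ.erase (∅ : Finset I0)).sigma (JW s)) (fun p => (-1) ^ p.1.card)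
    (fun p => N - ∑ a ∈ RJfull Rp sα s p.1, n (p.2⁻¹ • a)) (B := N)
    (fun p hp => sub_lt_self _ (hRS.sum_RJfull_pos hn
      (Finset.nonempty_iff_ne_empty.mpr (Finset.mem_erase.mp (Finset.mem_sigma.mp hp).1).1) _))
    q
  refine ⟨m, c, e, he, ?_⟩
  rw [← Finset.add_sum_erase _ _ (Finset.mem_univ ∅), JW_empty, RJfull_empty, ← hsum,
    Finset.sum_sigma]
  simp only [Finset.card_empty, pow_zero, one_mul, Finset.sum_empty, zero_div, sub_zero,
    Finset.sum_const, Finset.card_univ, nsmul_eq_mul, Finset.mul_sum]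
  congr 1
  refine Finset.sum_congr rfl fun J _ => Finset.sum_congr rfl fun w _ => ?_
  simp only [N]
  push_cast
  ring_nf

end RootSystem

theorem steinberg_character_topologically_unipotent_general
    {X : Type*} [AddCommGroup X]
    {W : Type*} [Group W] [Fintype W] [DistribMulAction W X]
    {I0 : Type*} [Fintype I0]
    (Rp : Finset X) (sα : I0 → X) (s : I0 → W)
    (hRS : IsRootSystemData Rp sα s)
    {K : Type*} [Field K]
    -- the normalized valuation of the nonarchimedean local field `K`
    (v : K → ℤ)
    (hv_mul : ∀ x y : K, x ≠ 0 → y ≠ 0 → v (x * y) = v x + v y)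
    (hv_min : ∀ x y : K, x ≠ 0 → y ≠ 0 → x + y ≠ 0 → min (v x) (v y) ≤ v (x + y))
    -- `q` is the cardinality of the residue field of `K`
    (q : ℝ) (hq : 1 < q)
    -- `τ` is a point of the split torus with `τ(α) - 1 ∈ 𝔭 \ {0}` for all roots `α`
    (τ : X → Kˣ) (hτ : ∀ a b : X, τ (a + b) = τ a * τ b)
    (hreg : ∀ a ∈ rootsOf Rp, (τ a : K) - 1 ≠ 0 ∧ 1 ≤ v ((τ a : K) - 1)) :
    -- `n_α := v(1 - τ(α))`
    (∀ a ∈ rootsOf Rp, v (1 - ((τ (-a) : K))) = v (1 - ((τ a : K)))) ∧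
    (∑ J : Finset I0, (-1 : ℝ) ^ J.card *
        ∑ w ∈ JW s J,
          Real.sqrt (∏ a ∈ Rp \ RJp Rp sα s J, q ^ (-v ((τ (w⁻¹ • a) : K))))
            * (Real.sqrt
                (∏ a ∈ rootsOf Rp \ RJfull Rp sα s J,
                  q ^ (-v (1 - ((τ (w⁻¹ • a) : K))))))⁻¹
      = ∑ J : Finset I0, (-1 : ℝ) ^ J.card *
          ∑ w ∈ JW s J,
            q ^ ((∑ a ∈ rootsOf Rp, (v (1 - ((τ a : K))) : ℝ)) / 2
                - (∑ a ∈ RJfull Rp sα s J, (v (1 - ((τ (w⁻¹ • a) : K))) : ℝ)) / 2)) ∧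
    (∃ (m : ℕ) (c : Fin m → ℤ) (e : Fin m → ℤ),
      (∀ k, e k < ∑ a ∈ rootsOf Rp, v (1 - ((τ a : K)))) ∧
      (∑ J : Finset I0, (-1 : ℝ) ^ J.card *
          ∑ w ∈ JW s J,
            q ^ ((∑ a ∈ rootsOf Rp, (v (1 - ((τ a : K))) : ℝ)) / 2
                - (∑ a ∈ RJfull Rp sα s J, (v (1 - ((τ (w⁻¹ • a) : K))) : ℝ)) / 2))
        = (Fintype.card W : ℝ) * q ^ ((∑ a ∈ rootsOf Rp, (v (1 - ((τ a : K))) : ℝ)) / 2)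
          + ∑ k : Fin m, (c k : ℝ) * q ^ ((e k : ℝ) / 2)) := by
  have hq0 : 0 < q := zero_lt_one.trans hq
  have hval_τ : ∀ a ∈ rootsOf Rp, v (τ a : K) = 0 := fun a ha =>
    val_eq_zero_of_pos_val_sub_one v hv_mul hv_min (τ a).ne_zero (hreg a ha).1 (hreg a ha).2
  have hsub_ne : ∀ a ∈ rootsOf Rp, 1 - (τ a : K) ≠ 0 := fun a ha => by
    rw [← neg_sub, neg_ne_zero]
    exact (hreg a ha).1
  have hn_pos : ∀ a ∈ rootsOf Rp, 0 < v (1 - (τ a : K)) := fun a ha => by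
    rw [← neg_sub, val_neg v hv_mul (hreg a ha).1]
    exact (hreg a ha).2
  refine ⟨fun a ha => ?_, Finset.sum_congr rfl fun J _ => ?_,
    hRS.exists_sum_eq_card_mul_add_lower_order hn_pos q⟩
  · rw [map_neg_eq_inv_of_map_add hτ, Units.val_inv_eq_inv_val]
    exact val_one_sub_inv v hv_mul (τ a).ne_zero (hsub_ne a ha) (hval_τ a ha)
  · rw [Finset.sum_congr rfl fun w _ =>
      hRS.casselman_term_eq hq0 hval_τ (fun a => v (1 - (τ a : K))) J w]

theorem steinberg_character_topologically_unipotent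
    {X : Type*} [AddCommGroup X]
    {W : Type*} [Group W] [Fintype W] [DistribMulAction W X]
    {I0 : Type*} [Fintype I0]
    (Rp : Finset X) (sα : I0 → X) (s : I0 → W)
    (hRS : IsRootSystemData Rp sα s)
    {K : Type*} [Field K]
    -- the normalized valuation of the nonarchimedean local field `K`
    (v : K → ℤ)
    (hv_mul : ∀ x y : K, x ≠ 0 → y ≠ 0 → v (x * y) = v x + v y)
    (hv_min : ∀ x y : K, x ≠ 0 → y ≠ 0 → x + y ≠ 0 → min (v x) (v y) ≤ v (x + y))
    (hv_surj : ∀ n : ℤ, ∃ x : K, x ≠ 0 ∧ v x = n)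
    -- `q` is the cardinality of the residue field of `K`
    (q : ℝ) (hq : 1 < q)
    -- `τ` is a point of the split torus with `τ(α) - 1 ∈ 𝔭 \ {0}` for all roots `α`
    (τ : X → Kˣ) (hτ : ∀ a b : X, τ (a + b) = τ a * τ b)
    (hreg : ∀ a ∈ rootsOf Rp, (τ a : K) - 1 ≠ 0 ∧ 1 ≤ v ((τ a : K) - 1)) :
    -- `n_α := v(1 - τ(α))`
    (∀ a ∈ rootsOf Rp, v (1 - ((τ (-a) : K))) = v (1 - ((τ a : K)))) ∧
    (∑ J : Finset I0, (-1 : ℝ) ^ J.card *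
        ∑ w ∈ JW s J,
          Real.sqrt (∏ a ∈ Rp \ RJp Rp sα s J, q ^ (-v ((τ (w⁻¹ • a) : K))))
            * (Real.sqrt
                (∏ a ∈ rootsOf Rp \ RJfull Rp sα s J,
                  q ^ (-v (1 - ((τ (w⁻¹ • a) : K))))))⁻¹
      = ∑ J : Finset I0, (-1 : ℝ) ^ J.card *
          ∑ w ∈ JW s J,
            q ^ ((∑ a ∈ rootsOf Rp, (v (1 - ((τ a : K))) : ℝ)) / 2
                - (∑ a ∈ RJfull Rp sα s J, (v (1 - ((τ (w⁻¹ • a) : K))) : ℝ)) / 2)) ∧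
    (∃ (m : ℕ) (c : Fin m → ℤ) (e : Fin m → ℤ),
      (∀ k, e k < ∑ a ∈ rootsOf Rp, v (1 - ((τ a : K)))) ∧
      (∑ J : Finset I0, (-1 : ℝ) ^ J.card *
          ∑ w ∈ JW s J,
            q ^ ((∑ a ∈ rootsOf Rp, (v (1 - ((τ a : K))) : ℝ)) / 2
                - (∑ a ∈ RJfull Rp sα s J, (v (1 - ((τ (w⁻¹ • a) : K))) : ℝ)) / 2))
        = (Fintype.card W : ℝ) * q ^ ((∑ a ∈ rootsOf Rp, (v (1 - ((τ a : K))) : ℝ)) / 2)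
          + ∑ k : Fin m, (c k : ℝ) * q ^ ((e k : ℝ) / 2)) :=
  steinberg_character_topologically_unipotent_general Rp sα s hRS v hv_mul hv_min q hq τ hτ hreg
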